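/- Suppose the one-sided conditional parallel trends condition holds for group g in all periods s with g ≤ s ≤ t: E[Y_s(0) − Y_{s−1}(0) | X, G_g = 1] ≥ E[Y_s(0) − Y_{s−1}(0) | X, C = 1] holds P(· | G_g = 1)-a.s. (as an inequality between versions of the two conditional expectations), together with overlap. Then for 2 ≤ g ≤ t ≤ T the weighted DID estimand is an upper bound for the group-time average treatment effect: ATT(g,t) ≤ E[(w_g^G − w_g^C)(Y_t − Y_{g−1})]. -/

import Mathlib

/-!
Write `w = C p / (1 - p)`. On `{G_g + C = 1}` one has `w - G_g = (p - G_g) / (1 - p)`, and `p` is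
the conditional mean of `G_g` given `X` there; hence `E[w 1_S] = E[G_g 1_S]` for every `S ∈ σ(X)`.
So the measures `w • P` and `G_g • P` agree on `σ(X)` and integrate every `σ(X)`-measurable
function alike. As `w` is a `σ(X)`-measurable multiple of `C`, the weighted control term sees each
one-period trend `Y_s(0) - Y_{s-1}(0)` only through `E[· | X, C = 1]`; moving that to the treated
group, one-sided parallel trends bounds it by the treated trend, and the trends over `g ≤ s ≤ t`
telescope to the gap between `E[Y_t(1) - Y_{g-1}(0) | G_g = 1]` and `ATT(g,t)`.
-/

open MeasureTheory ProbabilityTheory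
open scoped Classical

theorem Finset.sum_Icc_sub_pred {M : Type*} [AddCommGroup M] (f : ℕ → M) {a b : ℕ} (hab : a ≤ b) :
    ∑ i ∈ Finset.Icc a b, (f i - f (i - 1)) = f b - f (a - 1) := by
  induction b, hab using Nat.le_induction with
  | base => simp
  | succ n hn ih =>
    rw [Finset.sum_Icc_succ_top (by omega), ih, Nat.add_sub_cancel]
    abel

theorem Finset.eq_zero_of_sum_add_eq_one {ι : Type*} {s : Finset ι} {f : ι → ℝ} {c : ℝ}
    (hf : ∀ i ∈ s, 0 ≤ f i) (hc : 0 ≤ c) (hsum : ∑ i ∈ s, f i + c = 1) {i : ι} (hi : i ∈ s)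
    (hfi : f i = 1) : c = 0 ∧ ∀ j ∈ s, j ≠ i → f j = 0 := by
  rw [← Finset.add_sum_erase s f hi, hfi, add_assoc, add_eq_left] at hsum
  have hrest := (add_eq_zero_iff_of_nonneg
    (Finset.sum_nonneg fun j hj => hf j (Finset.mem_of_mem_erase hj)) hc).1 hsum
  refine ⟨hrest.2, fun j hj hji => ?_⟩
  exact (Finset.sum_eq_zero_iff_of_nonneg (fun k hk => hf k (Finset.mem_of_mem_erase hk))).1
    hrest.1 j (Finset.mem_erase.2 ⟨hji, hj⟩)

namespace MeasureTheory

variable {Ω : Type*} {m mΩ : MeasurableSpace Ω} {μ : Measure Ω} {s : Set Ω} {f φ : Ω → ℝ}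

theorem restrict_eq_smul_cond [IsFiniteMeasure μ] (s : Set Ω) : μ.restrict s = μ s • μ[|s] := by
  rcases eq_or_ne (μ s) 0 with h0 | h0
  · simp [h0]
  rw [ProbabilityTheory.cond, smul_smul, ENNReal.mul_inv_cancel h0 (measure_ne_top μ s),
    one_smul]

theorem setIntegral_eq_measureReal_mul_integral_cond [IsFiniteMeasure μ] (s : Set Ω)
    (f : Ω → ℝ) :
    ∫ ω in s, f ω ∂μ = μ.real s * ∫ ω, f ω ∂μ[|s] := by
  rw [restrict_eq_smul_cond, integral_smul_measure, smul_eq_mul, measureReal_def]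

theorem IntegrableOn.integrable_cond [IsFiniteMeasure μ] (hf : IntegrableOn f s μ) :
    Integrable f μ[|s] := by
  rcases eq_or_ne (μ s) 0 with h0 | h0
  · simp [cond_eq_zero_of_meas_eq_zero h0]
  exact hf.smul_measure (ENNReal.inv_ne_top.mpr h0)

theorem Integrable.integrable_cond [IsFiniteMeasure μ] (hf : Integrable f μ) (s : Set Ω) :
    Integrable f μ[|s] :=
  hf.integrableOn.integrable_cond

theorem Integrable.integrableOn_of_cond [IsFiniteMeasure μ] (hf : Integrable f μ[|s]) :
    IntegrableOn f s μ := by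
  rw [IntegrableOn, restrict_eq_smul_cond]
  exact hf.smul_measure (measure_ne_top μ s)

theorem trim_withDensity_ofReal_eq_of_setIntegral_eq (hm : m ≤ mΩ) {f₁ f₂ : Ω → ℝ}
    (hf₁ : Integrable f₁ μ) (hf₂ : Integrable f₂ μ) (h₁ : 0 ≤ᵐ[μ] f₁) (h₂ : 0 ≤ᵐ[μ] f₂)
    (h : ∀ s, MeasurableSet[m] s → ∫ ω in s, f₁ ω ∂μ = ∫ ω in s, f₂ ω ∂μ) :
    (μ.withDensity fun ω => ENNReal.ofReal (f₁ ω)).trim hm =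
      (μ.withDensity fun ω => ENNReal.ofReal (f₂ ω)).trim hm := by
  refine @Measure.ext _ m _ _ fun s hs => ?_
  rw [trim_measurableSet_eq hm hs, trim_measurableSet_eq hm hs, withDensity_apply _ (hm s hs),
    withDensity_apply _ (hm s hs),
    ← ofReal_integral_eq_lintegral_ofReal hf₁.restrict (ae_restrict_of_ae h₁),
    ← ofReal_integral_eq_lintegral_ofReal hf₂.restrict (ae_restrict_of_ae h₂), h s hs]

theorem integral_mul_eq_of_ae_eq_condExp (hm : m ≤ mΩ) [IsFiniteMeasure μ] {v : Ω → ℝ}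
    (hφ : StronglyMeasurable[m] φ) {c : ℝ} (hφc : ∀ᵐ ω ∂μ, ‖φ ω‖ ≤ c) (hf : Integrable f μ)
    (hv : v =ᵐ[μ] μ[f|m]) :
    ∫ ω, φ ω * v ω ∂μ = ∫ ω, φ ω * f ω ∂μ := by
  rw [← integral_condExp hm (f := fun ω => φ ω * f ω)]
  refine integral_congr_ae ?_
  filter_upwards [hv, condExp_stronglyMeasurable_mul_of_bound hm hφ hf c hφc] with ω hvω hω
  rw [hvω]
  exact hω.symm

theorem mul_eq_indicator_of_eq_zero_or_one {c : Ω → ℝ} (hc : ∀ ω, c ω = 0 ∨ c ω = 1) (f : Ω → ℝ) :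
    (fun ω => c ω * f ω) = {ω | c ω = 1}.indicator f := by
  ext ω
  rcases hc ω with h | h <;> simp [h]

theorem integral_mul_eq_measureReal_mul_integral_cond [IsFiniteMeasure μ] {c : Ω → ℝ}
    (hcm : Measurable c) (hc : ∀ ω, c ω = 0 ∨ c ω = 1) (f : Ω → ℝ) :
    ∫ ω, c ω * f ω ∂μ = μ.real {ω | c ω = 1} * ∫ ω, f ω ∂μ[|{ω | c ω = 1}] := by
  have hA : MeasurableSet {ω | c ω = 1} := hcm (measurableSet_singleton 1)
  rw [mul_eq_indicator_of_eq_zero_or_one hc, integral_indicator hA,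
    setIntegral_eq_measureReal_mul_integral_cond]

end MeasureTheory

-- the numerator of the paper's normalised control weight `w_g^C`
noncomputable def controlWeight {Ω : Type*} (C p : Ω → ℝ) (ω : Ω) : ℝ := p ω * C ω / (1 - p ω)

structure IsPropensityScore {Ω : Type*} (m : MeasurableSpace Ω) [mΩ : MeasurableSpace Ω]
    (P : Measure Ω) (G C p : Ω → ℝ) : Prop where
  le : m ≤ mΩ
  measurable_treated : Measurable G
  measurable_control : Measurable C
  treated_eq_zero_or_one : ∀ ω, G ω = 0 ∨ G ω = 1
  control_eq_zero_or_one : ∀ ω, C ω = 0 ∨ C ω = 1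
  control_eq_zero_of_treated : ∀ ω, G ω = 1 → C ω = 0
  measurable : Measurable[m] p
  ae_eq_condExp : p =ᵐ[P[|{ω | G ω + C ω = 1}]] P[|{ω | G ω + C ω = 1}][G|m]
  overlap : ∃ ε > 0, ∀ᵐ ω ∂P, 0 ≤ p ω ∧ p ω ≤ 1 - ε

namespace IsPropensityScore

variable {Ω : Type*} {m mΩ : MeasurableSpace Ω} {P : Measure Ω} {G C p : Ω → ℝ}

theorem exists_ae_odds_bound (h : IsPropensityScore m P G C p) :
    ∃ c, ∀ᵐ ω ∂P, p ω < 1 ∧ ‖(1 - p ω)⁻¹‖ ≤ c ∧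
      0 ≤ p ω / (1 - p ω) ∧ p ω / (1 - p ω) ≤ c := by
  obtain ⟨ε, hε, hp⟩ := h.overlap
  refine ⟨ε⁻¹, hp.mono fun ω ⟨h0, h1⟩ => ?_⟩
  have hinv : (1 - p ω)⁻¹ ≤ ε⁻¹ := inv_anti₀ hε (by linarith)
  have hpos : 0 < 1 - p ω := by linarith
  refine ⟨by linarith, by rwa [Real.norm_of_nonneg (inv_nonneg.2 hpos.le)], by positivity, ?_⟩
  rw [div_eq_mul_inv]
  exact (mul_le_of_le_one_left (inv_nonneg.2 hpos.le) (by linarith)).trans hinv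

theorem controlWeight_eq (ω : Ω) : controlWeight C p ω = C ω * (p ω / (1 - p ω)) := by
  rw [controlWeight, mul_comm, mul_div_assoc]

theorem exists_ae_controlWeight_bound (h : IsPropensityScore m P G C p) :
    ∃ c, ∀ᵐ ω ∂P, 0 ≤ controlWeight C p ω ∧ controlWeight C p ω ≤ c := by
  obtain ⟨c, hc⟩ := h.exists_ae_odds_bound
  refine ⟨c, hc.mono fun ω ⟨_, _, h0, h1⟩ => ?_⟩
  rw [controlWeight_eq]
  rcases h.control_eq_zero_or_one ω with hC | hC <;> simp only [hC, zero_mul, one_mul]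
  · exact ⟨le_rfl, h0.trans h1⟩
  · exact ⟨h0, h1⟩

theorem measurable_controlWeight (h : IsPropensityScore m P G C p) :
    Measurable (controlWeight C p) := by
  have hp : Measurable p := h.measurable.mono h.le le_rfl
  exact (hp.mul h.measurable_control).div (measurable_const.sub hp)

theorem integrable_controlWeight [IsFiniteMeasure P] (h : IsPropensityScore m P G C p) :
    Integrable (controlWeight C p) P := by
  obtain ⟨c, hc⟩ := h.exists_ae_controlWeight_bound
  refine (integrable_const c).mono' h.measurable_controlWeight.aestronglyMeasurable ?_
  filter_upwards [hc] with ω hω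
  rw [Real.norm_of_nonneg hω.1]
  exact hω.2

theorem integrable_treated (h : IsPropensityScore m P G C p)
    (μ : Measure Ω) [IsFiniteMeasure μ] : Integrable G μ := by
  refine (integrable_const (1 : ℝ)).mono' h.measurable_treated.aestronglyMeasurable ?_
  refine .of_forall fun ω => ?_
  rcases h.treated_eq_zero_or_one ω with hG | hG <;> simp [hG]

theorem integral_treated (h : IsPropensityScore m P G C p) :
    ∫ ω, G ω ∂P = P.real {ω | G ω = 1} := by
  have hA : MeasurableSet {ω | G ω = 1} := h.measurable_treated (measurableSet_singleton 1)
  rw [← integral_indicator_one hA]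
  refine integral_congr_ae (.of_forall fun ω => ?_)
  rcases h.treated_eq_zero_or_one ω with hG | hG <;> simp [hG]

theorem integrable_controlWeight_mul [IsFiniteMeasure P] (h : IsPropensityScore m P G C p)
    {f : Ω → ℝ} (hf : Integrable f P) : Integrable (fun ω => controlWeight C p ω * f ω) P := by
  obtain ⟨c, hc⟩ := h.exists_ae_controlWeight_bound
  exact hf.bdd_mul h.measurable_controlWeight.aestronglyMeasurable
    (hc.mono fun ω hω => by rw [Real.norm_of_nonneg hω.1]; exact hω.2)

theorem eq_zero_of_add_ne_one (h : IsPropensityScore m P G C p) {ω : Ω} (hω : G ω + C ω ≠ 1) :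
    G ω = 0 ∧ C ω = 0 := by
  rcases h.treated_eq_zero_or_one ω with hG | hG
  · rcases h.control_eq_zero_or_one ω with hC | hC
    · exact ⟨hG, hC⟩
    · simp [hG, hC] at hω
  · simp [hG, h.control_eq_zero_of_treated ω hG] at hω

theorem setIntegral_controlWeight [IsFiniteMeasure P] (h : IsPropensityScore m P G C p)
    {S : Set Ω} (hS : MeasurableSet[m] S) :
    ∫ ω in S, controlWeight C p ω ∂P = ∫ ω in S, G ω ∂P := by
  obtain ⟨c, hc⟩ := h.exists_ae_odds_bound
  set D := {ω | G ω + C ω = 1}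
  have hD : MeasurableSet D :=
    (h.measurable_treated.add h.measurable_control) (measurableSet_singleton 1)
  set φ := S.indicator fun ω => (1 - p ω)⁻¹
  have hφ : StronglyMeasurable[m] φ :=
    ((measurable_const.sub h.measurable).inv.indicator hS).stronglyMeasurable
  have hφc : ∀ᵐ ω ∂P[|D], ‖φ ω‖ ≤ c := cond_absolutelyContinuous.ae_le <|
    hc.mono fun ω hω => (norm_indicator_le_norm_self _ ω).trans hω.2.1
  have hφP : AEStronglyMeasurable φ P[|D] := (hφ.mono h.le).aestronglyMeasurable
  have hG : Integrable G P[|D] := h.integrable_treated _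
  have hp : Integrable p P[|D] := integrable_condExp.congr h.ae_eq_condExp.symm
  have hdiff : ∀ᵐ ω ∂P[|D],
      S.indicator (fun ω => controlWeight C p ω - G ω) ω = φ ω * p ω - φ ω * G ω := by
    filter_upwards [ae_cond_mem hD, cond_absolutelyContinuous.ae_le hc] with ω hωD hω
    have hC : C ω = 1 - G ω := by linarith [show G ω + C ω = 1 from hωD]
    by_cases hωS : ω ∈ S
    · have : 1 - p ω ≠ 0 := by linarith [hω.1]
      simp only [φ, Set.indicator_of_mem hωS, controlWeight, hC]
      field_simp
      ring
    · simp [φ, Set.indicator_of_notMem hωS]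
  have hoff : ∀ ω ∉ D, S.indicator (fun ω => controlWeight C p ω - G ω) ω = 0 := by
    intro ω hω
    obtain ⟨hG0, hC0⟩ := h.eq_zero_of_add_ne_one hω
    simp [controlWeight, hG0, hC0]
  rw [← sub_eq_zero, ← integral_sub h.integrable_controlWeight.integrableOn
    (h.integrable_treated P).integrableOn, ← integral_indicator (h.le S hS),
    ← setIntegral_eq_integral_of_forall_compl_eq_zero hoff,
    setIntegral_eq_measureReal_mul_integral_cond, integral_congr_ae hdiff,
    integral_sub (hp.bdd_mul hφP hφc) (hG.bdd_mul hφP hφc),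
    integral_mul_eq_of_ae_eq_condExp h.le hφ hφc hG h.ae_eq_condExp, sub_self, mul_zero]

theorem withDensity_treated_eq_restrict (h : IsPropensityScore m P G C p) :
    (P.withDensity fun ω => ENNReal.ofReal (G ω)) = P.restrict {ω | G ω = 1} := by
  have hA : MeasurableSet {ω | G ω = 1} := h.measurable_treated (measurableSet_singleton 1)
  rw [← withDensity_indicator_one hA]
  congr with ω
  rcases h.treated_eq_zero_or_one ω with hG | hG <;> simp [hG]

theorem trim_withDensity_controlWeight [IsFiniteMeasure P] (h : IsPropensityScore m P G C p) :
    (P.withDensity fun ω => ENNReal.ofReal (controlWeight C p ω)).trim h.le =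
      (P.restrict {ω | G ω = 1}).trim h.le := by
  obtain ⟨c, hc⟩ := h.exists_ae_controlWeight_bound
  rw [← h.withDensity_treated_eq_restrict]
  refine trim_withDensity_ofReal_eq_of_setIntegral_eq h.le h.integrable_controlWeight
    (h.integrable_treated P) (hc.mono fun _ hω => hω.1) (.of_forall fun ω => ?_)
    fun S hS => h.setIntegral_controlWeight hS
  rcases h.treated_eq_zero_or_one ω with hG | hG <;> simp [hG]

theorem integral_controlWeight_mul [IsFiniteMeasure P] (h : IsPropensityScore m P G C p)
    {F : Ω → ℝ} (hF : StronglyMeasurable[m] F)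
    (hFw : Integrable (fun ω => controlWeight C p ω * F ω) P) :
    IntegrableOn F {ω | G ω = 1} P ∧
      ∫ ω, controlWeight C p ω * F ω ∂P = ∫ ω in {ω | G ω = 1}, F ω ∂P := by
  obtain ⟨c, hc⟩ := h.exists_ae_controlWeight_bound
  have hw := h.measurable_controlWeight.ennreal_ofReal
  have hlt : ∀ᵐ ω ∂P, ENNReal.ofReal (controlWeight C p ω) < ⊤ := .of_forall fun _ => by simp
  have hwF : (fun ω => (ENNReal.ofReal (controlWeight C p ω)).toReal • F ω) =ᵐ[P]
      fun ω => controlWeight C p ω * F ω := by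
    filter_upwards [hc] with ω hω
    rw [ENNReal.toReal_ofReal hω.1, smul_eq_mul]
  have hQ := (integrable_withDensity_iff_integrable_smul' hw hlt).2 (hFw.congr hwF.symm)
  rw [← integral_congr_ae hwF, ← integral_withDensity_eq_integral_toReal_smul hw hlt]
  have htrim := h.trim_withDensity_controlWeight
  refine ⟨integrable_of_integrable_trim h.le (htrim ▸ hQ.trim h.le hF), ?_⟩
  rw [integral_trim h.le hF, htrim, ← integral_trim h.le hF]

theorem integral_controlWeight_mul_le [IsFiniteMeasure P] (h : IsPropensityScore m P G C p)
    {Z vG vC : Ω → ℝ} (hZ : Integrable Z P) (hvCm : StronglyMeasurable[m] vC)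
    (hvG : vG =ᵐ[P[|{ω | G ω = 1}]] P[|{ω | G ω = 1}][Z|m])
    (hvC : vC =ᵐ[P[|{ω | C ω = 1}]] P[|{ω | C ω = 1}][Z|m])
    (hle : ∀ᵐ ω ∂P[|{ω | G ω = 1}], vC ω ≤ vG ω) :
    ∫ ω, controlWeight C p ω * Z ω ∂P ≤ P.real {ω | G ω = 1} * ∫ ω, Z ω ∂P[|{ω | G ω = 1}] := by
  obtain ⟨c, hc⟩ := h.exists_ae_odds_bound
  set B := {ω | C ω = 1}
  have hB : MeasurableSet B := h.measurable_control (measurableSet_singleton 1)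
  set q := fun ω => p ω / (1 - p ω)
  have hq : StronglyMeasurable[m] q :=
    (h.measurable.div (measurable_const.sub h.measurable)).stronglyMeasurable
  have hqc : ∀ᵐ ω ∂P[|B], ‖q ω‖ ≤ c := cond_absolutelyContinuous.ae_le <|
    hc.mono fun ω hω => by rw [Real.norm_of_nonneg hω.2.2.1]; exact hω.2.2.2
  have hvCB : Integrable vC P[|B] := integrable_condExp.congr hvC.symm
  have hweight : ∀ F : Ω → ℝ, ∫ ω, controlWeight C p ω * F ω ∂P =
      P.real B * ∫ ω, q ω * F ω ∂P[|B] := fun F => by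
    simp only [controlWeight_eq, mul_assoc]
    exact integral_mul_eq_measureReal_mul_integral_cond h.measurable_control
      h.control_eq_zero_or_one _
  have hproj : ∫ ω, controlWeight C p ω * Z ω ∂P = ∫ ω, controlWeight C p ω * vC ω ∂P := by
    rw [hweight, hweight, integral_mul_eq_of_ae_eq_condExp h.le hq hqc (hZ.integrable_cond B) hvC]
  have hint : Integrable (fun ω => controlWeight C p ω * vC ω) P := by
    have hw : (fun ω => controlWeight C p ω * vC ω) = B.indicator fun ω => q ω * vC ω := by
      rw [← mul_eq_indicator_of_eq_zero_or_one h.control_eq_zero_or_one]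
      ext ω
      rw [controlWeight_eq, mul_assoc]
    rw [hw, integrable_indicator_iff hB]
    exact (hvCB.bdd_mul (hq.mono h.le).aestronglyMeasurable hqc).integrableOn_of_cond
  obtain ⟨hvCA, hA⟩ := h.integral_controlWeight_mul hvCm hint
  calc ∫ ω, controlWeight C p ω * Z ω ∂P
      = P.real {ω | G ω = 1} * ∫ ω, vC ω ∂P[|{ω | G ω = 1}] := by
        rw [hproj, hA, setIntegral_eq_measureReal_mul_integral_cond]
    _ ≤ P.real {ω | G ω = 1} * ∫ ω, vG ω ∂P[|{ω | G ω = 1}] :=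
        mul_le_mul_of_nonneg_left (integral_mono_ae hvCA.integrable_cond
          (integrable_condExp.congr hvG.symm) hle) measureReal_nonneg
    _ = P.real {ω | G ω = 1} * ∫ ω, Z ω ∂P[|{ω | G ω = 1}] := by
        rw [integral_congr_ae hvG, integral_condExp h.le]

theorem integral_weighted_did_eq [IsFiniteMeasure P] (h : IsPropensityScore m P G C p)
    (hA : P {ω | G ω = 1} ≠ 0) {f₁ f₂ O : Ω → ℝ} (hf₁ : Integrable f₁ P) (hf₂ : Integrable f₂ P)
    (hO₁ : ∀ ω, G ω = 1 → O ω = f₁ ω) (hO₂ : ∀ ω, C ω = 1 → O ω = f₂ ω) :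
    ∫ ω, (G ω / ∫ ω', G ω' ∂P -
        controlWeight C p ω / ∫ ω', controlWeight C p ω' ∂P) * O ω ∂P =
      ∫ ω, f₁ ω ∂P[|{ω | G ω = 1}] -
        (P.real {ω | G ω = 1})⁻¹ * ∫ ω, controlWeight C p ω * f₂ ω ∂P := by
  set a := P.real {ω | G ω = 1}
  have ha : a ≠ 0 := (measureReal_ne_zero_iff (measure_ne_top _ _)).2 hA
  have hGf : Integrable (fun ω => G ω * f₁ ω) P :=
    hf₁.bdd_mul (c := 1) h.measurable_treated.aestronglyMeasurable (.of_forall fun ω => by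
      rcases h.treated_eq_zero_or_one ω with hG | hG <;> simp [hG])
  have hpt : ∀ ω, (G ω / a - controlWeight C p ω / a) * O ω =
      a⁻¹ * (G ω * f₁ ω) - a⁻¹ * (controlWeight C p ω * f₂ ω) := fun ω => by
    rcases h.treated_eq_zero_or_one ω with hG | hG
    · rcases h.control_eq_zero_or_one ω with hC | hC
      · simp [controlWeight, hG, hC]
      · rw [hO₂ ω hC, hG]; ring
    · simp only [controlWeight, hG, h.control_eq_zero_of_treated ω hG, hO₁ ω hG]; ring
  rw [← setIntegral_univ (f := controlWeight C p), h.setIntegral_controlWeight MeasurableSet.univ,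
    setIntegral_univ, h.integral_treated, integral_congr_ae (.of_forall hpt),
    integral_sub (hGf.const_mul _) ((h.integrable_controlWeight_mul hf₂).const_mul _),
    integral_const_mul, integral_const_mul,
    integral_mul_eq_measureReal_mul_integral_cond h.measurable_treated h.treated_eq_zero_or_one,
    inv_mul_cancel_left₀ ha]

theorem integral_controlWeight_mul_sum_le [IsFiniteMeasure P] (h : IsPropensityScore m P G C p)
    {ι : Type*} (s : Finset ι) {Z : ι → Ω → ℝ} (hZ : ∀ i ∈ s, Integrable (Z i) P)
    (hle : ∀ i ∈ s, ∫ ω, controlWeight C p ω * Z i ω ∂P ≤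
      P.real {ω | G ω = 1} * ∫ ω, Z i ω ∂P[|{ω | G ω = 1}]) :
    ∫ ω, controlWeight C p ω * ∑ i ∈ s, Z i ω ∂P ≤
      P.real {ω | G ω = 1} * ∫ ω, ∑ i ∈ s, Z i ω ∂P[|{ω | G ω = 1}] := by
  simp_rw [Finset.mul_sum]
  rw [integral_finsetSum, integral_finsetSum, Finset.mul_sum]
  · exact Finset.sum_le_sum hle
  · exact fun i hi => (hZ i hi).integrable_cond _
  · exact fun i hi => h.integrable_controlWeight_mul (hZ i hi)

end IsPropensityScore

section StaggeredAdoption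

variable {Ω : Type*} {T : ℕ} {G : ℕ → Ω → ℝ} {C : Ω → ℝ} {Y0 Y1 Y : ℕ → Ω → ℝ} {ω : Ω}

theorem observed_sub_eq_of_cohort (hG : ∀ g, 0 ≤ G g ω) (hC : 0 ≤ C ω)
    (hsum : ∑ g ∈ Finset.Icc 2 T, G g ω + C ω = 1)
    (hobs : ∀ s, Y s ω = if ∃ g', 2 ≤ g' ∧ g' ≤ s ∧ G g' ω = 1 then Y1 s ω else Y0 s ω)
    {g t : ℕ} (hg : 2 ≤ g) (hgt : g ≤ t) (htT : t ≤ T) (hω : G g ω = 1) :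
    Y t ω - Y (g - 1) ω = Y1 t ω - Y0 (g - 1) ω := by
  have hgT : g ∈ Finset.Icc 2 T := Finset.mem_Icc.2 ⟨hg, hgt.trans htT⟩
  rw [hobs t, if_pos ⟨g, hg, hgt, hω⟩, hobs (g - 1), if_neg]
  rintro ⟨g', hg', hg'g, hω'⟩
  have := (Finset.eq_zero_of_sum_add_eq_one (fun g _ => hG g) hC hsum hgT hω).2 g'
    (Finset.mem_Icc.2 ⟨hg', by omega⟩) (by omega)
  linarith

theorem observed_sub_eq_of_control (hG : ∀ g, 0 ≤ G g ω)
    (hsum : ∑ g ∈ Finset.Icc 2 T, G g ω + C ω = 1)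
    (hobs : ∀ s, Y s ω = if ∃ g', 2 ≤ g' ∧ g' ≤ s ∧ G g' ω = 1 then Y1 s ω else Y0 s ω)
    {g t : ℕ} (hgt : g ≤ t) (htT : t ≤ T) (hω : C ω = 1) :
    Y t ω - Y (g - 1) ω = ∑ s ∈ Finset.Icc g t, (Y0 s ω - Y0 (s - 1) ω) := by
  have hY : ∀ s ≤ T, Y s ω = Y0 s ω := fun s hsT => by
    rw [hobs s, if_neg]
    rintro ⟨g', hg', hg's, hω'⟩
    have := (Finset.sum_eq_zero_iff_of_nonneg fun g _ => hG g).1 (by linarith) g'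
      (Finset.mem_Icc.2 ⟨hg', hg's.trans hsT⟩)
    linarith
  rw [Finset.sum_Icc_sub_pred (fun s => Y0 s ω) hgt, hY t htT, hY (g - 1) (by omega)]

end StaggeredAdoption

theorem one_sided_parallel_trends_upper_bound_general
    {Ω : Type*} [MeasurableSpace Ω] (P : Measure Ω) [IsProbabilityMeasure P]
    (k T : ℕ)
    -- potential outcomes, observed outcomes, covariates, group/control indicators
    (Y0 Y1 Y : ℕ → Ω → ℝ) (X : Ω → (Fin k → ℝ)) (G : ℕ → Ω → ℝ) (C : Ω → ℝ)
    -- measurability and integrability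
    (hY0int : ∀ s, Integrable (Y0 s) P) (hY1int : ∀ s, Integrable (Y1 s) P)
    (hXmeas : Measurable X) (hGmeas : ∀ g, Measurable (G g)) (hCmeas : Measurable C)
    -- indicator structure
    (hG01 : ∀ g ω, G g ω = 0 ∨ G g ω = 1)
    (hC01 : ∀ ω, C ω = 0 ∨ C ω = 1)
    (hsum : ∀ ω, (∑ g ∈ Finset.Icc 2 T, G g ω) + C ω = 1)
    -- observed outcomes
    (hobs : ∀ s ω, Y s ω =
      if ∃ g', 2 ≤ g' ∧ g' ≤ s ∧ G g' ω = 1 then Y1 s ω else Y0 s ω)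
    -- the pair (g, t) under consideration, 2 ≤ g ≤ t ≤ T
    (g t : ℕ) (hg : 2 ≤ g) (hgt : g ≤ t) (htT : t ≤ T)
    (hPg : 0 < P {ω | G g ω = 1})
    -- the generalized propensity score: a σ(X)-measurable version of E[G_g | X, G_g + C = 1]
    (p : Ω → ℝ)
    (hpmeas : Measurable[MeasurableSpace.comap X inferInstance] p)
    (hpver : p =ᵐ[P[|{ω | G g ω + C ω = 1}]]
      (P[|{ω | G g ω + C ω = 1}])[G g | MeasurableSpace.comap X inferInstance])
    -- overlap
    (ε : ℝ) (hε : 0 < ε)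
    (hoverlap : ∀ᵐ ω ∂P, 0 ≤ p ω ∧ p ω ≤ 1 - ε)
    -- one-sided conditional parallel trends for group g in all periods g ≤ s ≤ t
    (hOS : ∀ s, g ≤ s → s ≤ t →
      ∃ mG mC : (Fin k → ℝ) → ℝ, Measurable mG ∧ Measurable mC ∧
        (fun ω => mG (X ω)) =ᵐ[P[|{ω | G g ω = 1}]]
          (P[|{ω | G g ω = 1}])[fun ω => Y0 s ω - Y0 (s - 1) ω |
            MeasurableSpace.comap X inferInstance] ∧
        (fun ω => mC (X ω)) =ᵐ[P[|{ω | C ω = 1}]]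
          (P[|{ω | C ω = 1}])[fun ω => Y0 s ω - Y0 (s - 1) ω |
            MeasurableSpace.comap X inferInstance] ∧
        (∀ᵐ ω ∂(P[|{ω | G g ω = 1}]), mC (X ω) ≤ mG (X ω))) :
    -- conclusion: the weighted DID estimand is an upper bound for ATT(g,t)
    ∫ ω, (Y1 t ω - Y0 t ω) ∂(P[|{ω | G g ω = 1}]) ≤
      ∫ ω,
        (G g ω / (∫ ω', G g ω' ∂P) -
          (p ω * C ω / (1 - p ω)) / (∫ ω', p ω' * C ω' / (1 - p ω') ∂P)) *
        (Y t ω - Y (g - 1) ω) ∂P := by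
  have hG0 : ∀ ω g, 0 ≤ G g ω := fun ω g => by rcases hG01 g ω with h | h <;> simp [h]
  have hC0 : ∀ ω, 0 ≤ C ω := fun ω => by rcases hC01 ω with h | h <;> simp [h]
  have hgT : g ∈ Finset.Icc 2 T := Finset.mem_Icc.2 ⟨hg, hgt.trans htT⟩
  have h : IsPropensityScore (MeasurableSpace.comap X inferInstance) P (G g) C p :=
    ⟨hXmeas.comap_le, hGmeas g, hCmeas, hG01 g, hC01,
      fun ω hω => (Finset.eq_zero_of_sum_add_eq_one (fun g _ => hG0 ω g) (hC0 ω) (hsum ω) hgT hω).1,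
      hpmeas, hpver, ⟨ε, hε, hoverlap⟩⟩
  have hZ : ∀ s, Integrable (fun ω => Y0 s ω - Y0 (s - 1) ω) P :=
    fun s => (hY0int s).sub (hY0int (s - 1))
  have hΔ := integrable_finsetSum (Finset.Icc g t) fun s _ => hZ s
  have hf₁ : Integrable (fun ω => Y1 t ω - Y0 (g - 1) ω) P := (hY1int t).sub (hY0int _)
  have htrend := h.integral_controlWeight_mul_sum_le (Finset.Icc g t) (fun s _ => hZ s)
    fun s hs => by
      obtain ⟨hgs, hst⟩ := Finset.mem_Icc.1 hs
      obtain ⟨mG, mC, -, hmC, hvG, hvC, hle⟩ := hOS s hgs hst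
      exact h.integral_controlWeight_mul_le (hZ s)
        (hmC.comp (comap_measurable X)).stronglyMeasurable hvG hvC hle
  refine le_of_le_of_eq ?_ (h.integral_weighted_did_eq hPg.ne' hf₁ hΔ
    (fun ω hω => observed_sub_eq_of_cohort (hG0 ω) (hC0 ω) (hsum ω) (hobs · ω) hg hgt htT hω)
    fun ω hω => observed_sub_eq_of_control (hG0 ω) (hsum ω) (hobs · ω) hgt htT hω).symm
  have hA : 0 < P.real {ω | G g ω = 1} := ENNReal.toReal_pos hPg.ne' (measure_ne_top _ _)
  calc ∫ ω, (Y1 t ω - Y0 t ω) ∂(P[|{ω | G g ω = 1}])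
      = ∫ ω, (Y1 t ω - Y0 (g - 1) ω) ∂(P[|{ω | G g ω = 1}]) -
          ∫ ω, ∑ s ∈ Finset.Icc g t, (Y0 s ω - Y0 (s - 1) ω) ∂(P[|{ω | G g ω = 1}]) := by
        rw [← integral_sub (hf₁.integrable_cond _) (hΔ.integrable_cond _)]
        refine integral_congr_ae (.of_forall fun ω => ?_)
        simp only [Finset.sum_Icc_sub_pred (fun s => Y0 s ω) hgt]
        ring
    _ ≤ _ := sub_le_sub_left ((inv_mul_le_iff₀ hA).2 htrend) _

/-- one-sided conditional parallel trends gives an upper bound.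
If `E[Y_s(0) − Y_{s−1}(0) | X, G_g = 1] ≥ E[Y_s(0) − Y_{s−1}(0) | X, C = 1]`
(`P(·|G_g=1)`-a.s., as an inequality between versions) for all `g ≤ s ≤ t`,
together with overlap, then for `2 ≤ g ≤ t ≤ T`
`ATT(g,t) ≤ E[(w_g^G − w_g^C)(Y_t − Y_{g−1})]`. -/
theorem one_sided_parallel_trends_upper_bound
    {Ω : Type*} [MeasurableSpace Ω] (P : Measure Ω) [IsProbabilityMeasure P]
    (k T : ℕ) (hT : 2 ≤ T)
    -- potential outcomes, observed outcomes, covariates, group/control indicators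
    (Y0 Y1 Y : ℕ → Ω → ℝ) (X : Ω → (Fin k → ℝ)) (G : ℕ → Ω → ℝ) (C : Ω → ℝ)
    -- measurability and integrability
    (hY0meas : ∀ s, Measurable (Y0 s)) (hY1meas : ∀ s, Measurable (Y1 s))
    (hY0int : ∀ s, Integrable (Y0 s) P) (hY1int : ∀ s, Integrable (Y1 s) P)
    (hXmeas : Measurable X) (hGmeas : ∀ g, Measurable (G g)) (hCmeas : Measurable C)
    -- indicator structure
    (hG01 : ∀ g ω, G g ω = 0 ∨ G g ω = 1)
    (hC01 : ∀ ω, C ω = 0 ∨ C ω = 1)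
    (hsum : ∀ ω, (∑ g ∈ Finset.Icc 2 T, G g ω) + C ω = 1)
    -- observed outcomes
    (hobs : ∀ s ω, Y s ω =
      if ∃ g', 2 ≤ g' ∧ g' ≤ s ∧ G g' ω = 1 then Y1 s ω else Y0 s ω)
    -- the pair (g, t) under consideration, 2 ≤ g ≤ t ≤ T
    (g t : ℕ) (hg : 2 ≤ g) (hgt : g ≤ t) (htT : t ≤ T)
    (hPg : 0 < P {ω | G g ω = 1}) (hPC : 0 < P {ω | C ω = 1})
    -- the generalized propensity score: a σ(X)-measurable version of E[G_g | X, G_g + C = 1]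
    (p : Ω → ℝ)
    (hpmeas : Measurable[MeasurableSpace.comap X inferInstance] p)
    (hpver : p =ᵐ[P[|{ω | G g ω + C ω = 1}]]
      (P[|{ω | G g ω + C ω = 1}])[G g | MeasurableSpace.comap X inferInstance])
    -- overlap
    (ε : ℝ) (hε : 0 < ε)
    (hoverlap : ∀ᵐ ω ∂P, 0 ≤ p ω ∧ p ω ≤ 1 - ε)
    -- one-sided conditional parallel trends for group g in all periods g ≤ s ≤ t
    (hOS : ∀ s, g ≤ s → s ≤ t →
      ∃ mG mC : (Fin k → ℝ) → ℝ, Measurable mG ∧ Measurable mC ∧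
        (fun ω => mG (X ω)) =ᵐ[P[|{ω | G g ω = 1}]]
          (P[|{ω | G g ω = 1}])[fun ω => Y0 s ω - Y0 (s - 1) ω |
            MeasurableSpace.comap X inferInstance] ∧
        (fun ω => mC (X ω)) =ᵐ[P[|{ω | C ω = 1}]]
          (P[|{ω | C ω = 1}])[fun ω => Y0 s ω - Y0 (s - 1) ω |
            MeasurableSpace.comap X inferInstance] ∧
        (∀ᵐ ω ∂(P[|{ω | G g ω = 1}]), mC (X ω) ≤ mG (X ω))) :
    -- conclusion: the weighted DID estimand is an upper bound for ATT(g,t)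
    ∫ ω, (Y1 t ω - Y0 t ω) ∂(P[|{ω | G g ω = 1}]) ≤
      ∫ ω,
        (G g ω / (∫ ω', G g ω' ∂P) -
          (p ω * C ω / (1 - p ω)) / (∫ ω', p ω' * C ω' / (1 - p ω') ∂P)) *
        (Y t ω - Y (g - 1) ω) ∂P :=
  one_sided_parallel_trends_upper_bound_general P k T Y0 Y1 Y X G C hY0int hY1int hXmeas hGmeas
    hCmeas hG01 hC01 hsum hobs g t hg hgt htT hPg p hpmeas hpver ε hε hoverlap hOS
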